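/- Let m ≥ 2 and let (L, (h_1, …, h_m)) be a backward self-similar system such that h_1⁻¹(L) ∩ h_j⁻¹(L) = ∅ for every j ∈ {2, …, m}. Write (1)^k for the word (1, …, 1) of length k and (1)^∞ for the constant infinite word (1, 1, 1, …). Then: (1) for every k ≥ 1, the connected component of the vertex (1)^k in Γ_k is the singleton {(1)^k}; (2) for every k ≥ 1, the number of connected components of Γ_k is strictly less than the number of connected components of Γ_{k+1}; (3) L has infinitely many connected components; and (4) for every x′ ∈ {1, …, m}^ℕ with x′ ≠ (1)^∞, every y ∈ L_{(1)^∞} and every y′ ∈ L_{x′}, there is no connected component A of L containing both y and y′. -/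

import Mathlib

open Set

/-- `h_w⁻¹(L)` for a finite word `w = (w₁, …, w_k)`, encoded as the list `[w₁, …, w_k]`,
namely `h_{w₁}⁻¹(h_{w₂}⁻¹(⋯ h_{w_k}⁻¹(L) ⋯))`. -/
def bwdPre {X : Type*} {m : ℕ} (h : Fin m → X → X) (L : Set X) : List (Fin m) → Set X
  | [] => L
  | a :: w => h a ⁻¹' bwdPre h L w

/-- The truncation `x|k` of an infinite word `x`. -/
def wordTrunc {m : ℕ} (x : ℕ → Fin m) (k : ℕ) : List (Fin m) :=
  List.ofFn fun i : Fin k => x i.val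

/-- `L_x = ⋂_{j ≥ 1} h_{x|j}⁻¹(L)`. -/
def bwdLimSet {X : Type*} {m : ℕ} (h : Fin m → X → X) (L : Set X) (x : ℕ → Fin m) : Set X :=
  ⋂ j : ℕ, bwdPre h L (wordTrunc x (j + 1))

/-- The graph `Γ_k`: vertices are the words of length `k`, and two distinct words `w, w'`
are adjacent iff `h_w⁻¹(L) ∩ h_{w'}⁻¹(L) ≠ ∅`. -/
def bwdGraph {X : Type*} {m : ℕ} (h : Fin m → X → X) (L : Set X) (k : ℕ) :
    SimpleGraph (Fin k → Fin m) where
  Adj w w' := w ≠ w' ∧ (bwdPre h L (List.ofFn w) ∩ bwdPre h L (List.ofFn w')).Nonempty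
  symm := by
    constructor
    intro w w' hw
    obtain ⟨hne, hx⟩ := hw
    exact ⟨hne.symm, by rwa [Set.inter_comm] at hx⟩
  loopless := by
    constructor
    intro w hw
    exact hw.1 rfl

set_option linter.unusedSectionVars false
section helpers
variable {X : Type*} {m : ℕ} [NeZero m] (h : Fin m → X → X) (L : Set X)

lemma bwdPre_mono {L₁ L₂ : Set X} (hs : L₁ ⊆ L₂) : ∀ w, bwdPre h L₁ w ⊆ bwdPre h L₂ w
  | [] => hs
  | _ :: w => preimage_mono (bwdPre_mono hs w)

lemma bwdPre_append : ∀ u v, bwdPre h L (u ++ v) = bwdPre h (bwdPre h L v) u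
  | [], v => rfl
  | a :: u, v => by simp [bwdPre, bwdPre_append u v]

variable (hinv : L = ⋃ j, h j ⁻¹' L)

include hinv in
lemma bwdPre_subset : ∀ w, bwdPre h L w ⊆ L
  | [] => subset_rfl
  | a :: w => fun x hx => by
      have : x ∈ h a ⁻¹' L := preimage_mono (bwdPre_subset w) hx
      rw [hinv]; exact mem_iUnion.2 ⟨a, this⟩

include hinv in
lemma bwdPre_concat_subset (u : List (Fin m)) (a : Fin m) :
    bwdPre h L (u ++ [a]) ⊆ bwdPre h L u := by
  rw [bwdPre_append]
  exact bwdPre_mono h (bwdPre_subset h L hinv [a]) u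

include hinv in
lemma bwdPre_nonempty (hLne : L.Nonempty)
    (hfib : ∀ z ∈ L, ∀ j, (h j ⁻¹' ({z} : Set X)).Nonempty) :
    ∀ w, (bwdPre h L w).Nonempty
  | [] => hLne
  | a :: w => by
      obtain ⟨z, hz⟩ := bwdPre_nonempty hLne hfib w
      obtain ⟨x, hx⟩ := hfib z (bwdPre_subset h L hinv w hz) a
      exact ⟨x, show h a x ∈ bwdPre h L w by
        simp only [mem_preimage, mem_singleton_iff] at hx; rw [hx]; exact hz⟩

lemma bwdPre_closed [TopologicalSpace X] (hcont : ∀ j, Continuous (h j)) (hLcl : IsClosed L) :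
    ∀ w, IsClosed (bwdPre h L w)
  | [] => hLcl
  | a :: w => (bwdPre_closed hcont hLcl w).preimage (hcont a)

variable (hsep : ∀ j : Fin m, j ≠ 0 → h 0 ⁻¹' L ∩ h j ⁻¹' L = ∅)

include hinv hsep in
lemma bwdPre_zero_disjoint :
    ∀ u : List (Fin m), u ≠ List.replicate u.length 0 →
      bwdPre h L (List.replicate u.length 0) ∩ bwdPre h L u = ∅
  | [], hu => absurd rfl hu
  | a :: t, hu => by
      rw [eq_empty_iff_forall_notMem]
      intro x ⟨hx0, hxu⟩
      simp only [List.length_cons, List.replicate_succ] at hx0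
      by_cases ha : a = 0
      · subst ha
        have ht : t ≠ List.replicate t.length 0 := fun hh => hu (by
          rw [List.length_cons, List.replicate_succ, ← hh])
        have := bwdPre_zero_disjoint t ht
        rw [eq_empty_iff_forall_notMem] at this
        exact this (h 0 x) ⟨hx0, hxu⟩
      · have h1 : x ∈ h 0 ⁻¹' L := preimage_mono (bwdPre_subset h L hinv _) hx0
        have h2 : x ∈ h a ⁻¹' L := preimage_mono (bwdPre_subset h L hinv _) hxu
        have := hsep a ha
        rw [eq_empty_iff_forall_notMem] at this
        exact this x ⟨h1, h2⟩

include hinv hsep in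
lemma bwdPre_zero_disjoint' {n : ℕ} (u : Fin n → Fin m) (hu : u ≠ fun _ => 0) :
    bwdPre h L (List.replicate n 0) ∩ bwdPre h L (List.ofFn u) = ∅ := by
  have hne : List.ofFn u ≠ List.replicate (List.ofFn u).length 0 := by
    intro hh
    apply hu
    apply List.ofFn_injective
    rw [hh, List.length_ofFn, List.ofFn_const]
  have := bwdPre_zero_disjoint h L hinv hsep (List.ofFn u) hne
  rwa [List.length_ofFn] at this

include hinv in
lemma bwdPre_cover : ∀ (k : ℕ) (z : X), z ∈ L → ∃ w : Fin k → Fin m, z ∈ bwdPre h L (List.ofFn w)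
  | 0, z, hz => ⟨Fin.elim0, by simpa [bwdPre] using hz⟩
  | k + 1, z, hz => by
      have : z ∈ ⋃ j, h j ⁻¹' L := hinv ▸ hz
      obtain ⟨j, hj⟩ := mem_iUnion.1 this
      obtain ⟨w, hw⟩ := bwdPre_cover k (h j z) hj
      refine ⟨Fin.cons j w, ?_⟩
      rw [List.ofFn_succ]
      simpa [bwdPre, Fin.cons_succ] using hw

include hinv hsep in
lemma bwdPre_main_sep [MetricSpace X] (hcont : ∀ j, Continuous (h j)) (hLcp : IsCompact L)
    (k : ℕ) {A : Set X} (hA : A ⊆ L) (hAconn : IsPreconnected A)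
    (hne : (A ∩ bwdPre h L (List.replicate k 0)).Nonempty) :
    A ⊆ bwdPre h L (List.replicate k 0) := by
  set S := bwdPre h L (List.replicate k 0) with hS
  set U := ⋃ w : {w : Fin k → Fin m // w ≠ fun _ => 0}, bwdPre h L (List.ofFn w.1) with hU
  have hScl : IsClosed S := bwdPre_closed h L hcont hLcp.isClosed _
  have hScp : IsCompact S := hLcp.of_isClosed_subset hScl (bwdPre_subset h L hinv _)
  have hUcl : IsClosed U := isClosed_iUnion_of_finite fun w =>
    bwdPre_closed h L hcont hLcp.isClosed _
  have hUsub : U ⊆ L := iUnion_subset fun w => bwdPre_subset h L hinv _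
  have hUcp : IsCompact U := hLcp.of_isClosed_subset hUcl hUsub
  have hdisj : Disjoint S U := by
    rw [Set.disjoint_iff_inter_eq_empty, hS, hU, inter_iUnion]
    refine iUnion_eq_empty.2 fun w => ?_
    exact bwdPre_zero_disjoint' h L hinv hsep w.1 w.2
  have hcover : L ⊆ S ∪ U := by
    intro z hz
    obtain ⟨w, hw⟩ := bwdPre_cover h L hinv k z hz
    by_cases hw0 : w = fun _ => 0
    · left; subst hw0; rwa [List.ofFn_const] at hw
    · right; exact mem_iUnion.2 ⟨⟨w, hw0⟩, hw⟩
  obtain ⟨O1, O2, hO1, hO2, hSO1, hUO2, hOd⟩ :=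
    SeparatedNhds.of_isCompact_isCompact hScp hUcp hdisj
  have hAO : A ⊆ O1 ∪ O2 :=
    hA.trans (hcover.trans (union_subset_union hSO1 hUO2))
  obtain ⟨x, hxA, hxS⟩ := hne
  have hAO1 : A ⊆ O1 :=
    hAconn.subset_left_of_subset_union hO1 hO2 hOd hAO ⟨x, hxA, hSO1 hxS⟩
  intro a ha
  rcases hcover (hA ha) with haS | haU
  · exact haS
  · exact absurd (hUO2 haU) (fun h2 => hOd.ne_of_mem (hAO1 ha) h2 rfl)

end helpers

/-- Suppose `m ≥ 2` and `h₁⁻¹(L) ∩ h_j⁻¹(L) = ∅` for every `j ≠ 1` (here the letter `1`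
is `0 : Fin m`). Then: (1) the connected component of `(1)^k` in `Γ_k` is the singleton
`{(1)^k}`; (2) the number of connected components of `Γ_k` strictly increases with `k`;
(3) `L` has infinitely many connected components; and (4) no connected component of `L`
contains both a point of `L_{(1)^∞}` and a point of `L_{x'}` for `x' ≠ (1)^∞`. -/
theorem backward_isolated_first_letter
    {X : Type*} [MetricSpace X] {m : ℕ} [NeZero m] (hm : 2 ≤ m)
    (h : Fin m → X → X) (hcont : ∀ j, Continuous (h j))
    (L : Set X) (hLne : L.Nonempty) (hLcp : IsCompact L)
    (hinv : L = ⋃ j, h j ⁻¹' L)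
    (hfib : ∀ z ∈ L, ∀ j, (h j ⁻¹' ({z} : Set X)).Nonempty)
    (hsep : ∀ j : Fin m, j ≠ 0 → h 0 ⁻¹' L ∩ h j ⁻¹' L = ∅) :
    (∀ (k : ℕ) (w : Fin (k + 1) → Fin m),
        (bwdGraph h L (k + 1)).connectedComponentMk w =
          (bwdGraph h L (k + 1)).connectedComponentMk (fun _ => 0) →
        w = fun _ => 0) ∧
    (∀ k : ℕ, Nat.card ((bwdGraph h L (k + 1)).ConnectedComponent) <
        Nat.card ((bwdGraph h L (k + 2)).ConnectedComponent)) ∧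
    {C : Set X | ∃ y ∈ L, C = connectedComponentIn L y}.Infinite ∧
    (∀ x' : ℕ → Fin m, x' ≠ (fun _ => 0) →
      ∀ y ∈ bwdLimSet h L (fun _ => 0), ∀ y' ∈ bwdLimSet h L x',
        ¬ ∃ A : Set X, (∃ z ∈ L, A = connectedComponentIn L z) ∧ y ∈ A ∧ y' ∈ A) := by
  classical
  -- Part 1
  have part1 : ∀ (k : ℕ) (w : Fin (k + 1) → Fin m),
      (bwdGraph h L (k + 1)).connectedComponentMk w =
        (bwdGraph h L (k + 1)).connectedComponentMk (fun _ => 0) →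
      w = fun _ => 0 := by
    intro k w hw
    have hr : (bwdGraph h L (k + 1)).Reachable (fun _ => 0) w :=
      (SimpleGraph.ConnectedComponent.exact hw).symm
    obtain ⟨p⟩ := hr
    cases p with
    | nil => rfl
    | cons hadj p' =>
      exfalso
      obtain ⟨hne, x, hx1, hx2⟩ := hadj
      rw [List.ofFn_const] at hx1
      have := bwdPre_zero_disjoint' h L hinv hsep _ (Ne.symm hne)
      rw [eq_empty_iff_forall_notMem] at this
      exact this x ⟨hx1, hx2⟩
  refine ⟨part1, ?_, ?_, ?_⟩
  · -- Part 2
    intro k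
    set G1 := bwdGraph h L (k + 1) with hG1
    set G2 := bwdGraph h L (k + 2) with hG2
    have hsub : ∀ w : Fin (k + 2) → Fin m,
        bwdPre h L (List.ofFn w) ⊆ bwdPre h L (List.ofFn (w ∘ Fin.castSucc)) := by
      intro w
      rw [List.ofFn_succ' w, List.concat_eq_append]
      exact bwdPre_concat_subset h L hinv _ _
    have hstep : ∀ v w : Fin (k + 2) → Fin m, G2.Adj v w →
        G1.connectedComponentMk (v ∘ Fin.castSucc) =
          G1.connectedComponentMk (w ∘ Fin.castSucc) := by
      intro v w hadj
      obtain ⟨hne, x, hx1, hx2⟩ := hadj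
      by_cases heq : v ∘ Fin.castSucc = w ∘ Fin.castSucc
      · rw [heq]
      · exact SimpleGraph.ConnectedComponent.connectedComponentMk_eq_of_adj ⟨heq, x, hsub v hx1, hsub w hx2⟩
    have hwalk : ∀ v w : Fin (k + 2) → Fin m, G2.Walk v w →
        G1.connectedComponentMk (v ∘ Fin.castSucc) =
          G1.connectedComponentMk (w ∘ Fin.castSucc) := by
      intro v w p
      induction p with
      | nil => rfl
      | cons hadj p ih => exact (hstep _ _ hadj).trans ih
    let f : G2.ConnectedComponent → G1.ConnectedComponent :=
      SimpleGraph.ConnectedComponent.lift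
        (fun w => G1.connectedComponentMk (w ∘ Fin.castSucc))
        (fun v w p _ => hwalk v w p)
    have hfsurj : Function.Surjective f := by
      intro c
      induction c using SimpleGraph.ConnectedComponent.ind with
      | _ u =>
        refine ⟨G2.connectedComponentMk (Fin.snoc u 0), ?_⟩
        show G1.connectedComponentMk (Fin.snoc u 0 ∘ Fin.castSucc) = _
        congr 1
        funext i
        exact Fin.snoc_castSucc _ _ _
    have hfninj : ¬ Function.Injective f := by
      intro hinj
      set one : Fin m := ⟨1, hm⟩ with hone
      have h10 : one ≠ 0 := by simp [hone, Fin.ext_iff]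
      have hfa : f (G2.connectedComponentMk (fun _ => 0)) =
          G1.connectedComponentMk (fun _ => 0) := rfl
      have hfb : f (G2.connectedComponentMk (Fin.snoc (fun _ => 0) one)) =
          G1.connectedComponentMk (fun _ => 0) := by
        show G1.connectedComponentMk (Fin.snoc (fun _ => 0) one ∘ Fin.castSucc) = _
        congr 1
        funext i
        exact Fin.snoc_castSucc _ _ _
      have := hinj (hfb.trans hfa.symm)
      have heq := part1 (k + 1) (Fin.snoc (fun _ => 0) one) this
      have : one = 0 := by
        have := congrFun heq (Fin.last (k + 1))
        rwa [Fin.snoc_last] at this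
      exact h10 this
    haveI : Fintype G1.ConnectedComponent := Fintype.ofFinite _
    haveI : Fintype G2.ConnectedComponent := Fintype.ofFinite _
    rw [Nat.card_eq_fintype_card, Nat.card_eq_fintype_card]
    exact Fintype.card_lt_of_surjective_not_injective f hfsurj hfninj
  · -- Part 3
    set one : Fin m := ⟨1, hm⟩ with hone
    have h10 : one ≠ 0 := by simp [hone, Fin.ext_iff]
    have hpex : ∀ k : ℕ, (bwdPre h L (List.replicate k 0 ++ [one])).Nonempty :=
      fun k => bwdPre_nonempty h L hinv hLne hfib _
    choose p hp using hpex
    have hpS : ∀ k, p k ∈ bwdPre h L (List.replicate k 0) :=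
      fun k => bwdPre_concat_subset h L hinv _ _ (hp k)
    have hpL : ∀ k, p k ∈ L := fun k => bwdPre_subset h L hinv _ (hpS k)
    have hanti : Antitone (fun n => bwdPre h L (List.replicate n (0 : Fin m))) := by
      refine antitone_nat_of_succ_le fun n => ?_
      rw [List.replicate_succ']
      exact bwdPre_concat_subset h L hinv _ _
    have hpnot : ∀ k, p k ∉ bwdPre h L (List.replicate (k + 1) 0) := by
      intro k hk
      have hu : List.replicate k (0 : Fin m) ++ [one] ≠
          List.replicate (List.replicate k (0 : Fin m) ++ [one]).length 0 := by
        simp only [List.length_append, List.length_replicate, List.length_cons,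
          List.length_nil, List.replicate_succ']
        intro hh
        exact h10 (by simpa using List.append_cancel_left hh)
      have := bwdPre_zero_disjoint h L hinv hsep (List.replicate k 0 ++ [one]) hu
      rw [eq_empty_iff_forall_notMem] at this
      apply this (p k)
      constructor
      · simpa using hk
      · exact hp k
    apply Set.infinite_of_injective_forall_mem
      (f := fun k : ℕ => connectedComponentIn L (p k))
    · have hlt : ∀ a b : ℕ, a < b →
          connectedComponentIn L (p a) ≠ connectedComponentIn L (p b) := by
        intro a b hab heq
        have hCb : connectedComponentIn L (p b) ⊆ bwdPre h L (List.replicate (a + 1) 0) := by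
          refine bwdPre_main_sep h L hinv hsep hcont hLcp (a + 1)
            (connectedComponentIn_subset L (p b)) isPreconnected_connectedComponentIn
            ⟨p b, mem_connectedComponentIn (hpL b), hanti hab (hpS b)⟩
        have hpaC : p a ∈ connectedComponentIn L (p b) :=
          heq ▸ mem_connectedComponentIn (hpL a)
        exact hpnot a (hCb hpaC)
      intro a b hab
      rcases lt_trichotomy a b with hl | he | hg
      · exact absurd hab (hlt a b hl)
      · exact he
      · exact absurd hab.symm (hlt b a hg)
    · exact fun k => ⟨p k, hpL k, rfl⟩
  · -- Part 4
    intro x' hx' y hy y' hy' ⟨A, ⟨z, hz, hA⟩, hyA, hy'A⟩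
    obtain ⟨k, hk⟩ := Function.ne_iff.1 hx'
    have hyS : y ∈ bwdPre h L (List.replicate (k + 1) 0) := by
      have := mem_iInter.1 hy k
      simpa [wordTrunc, List.ofFn_const, List.replicate_succ] using this
    have hy'T : y' ∈ bwdPre h L (wordTrunc x' (k + 1)) := mem_iInter.1 hy' k
    have hAL : A ⊆ L := hA ▸ connectedComponentIn_subset L z
    have hAconn : IsPreconnected A := hA ▸ isPreconnected_connectedComponentIn
    have hAsub : A ⊆ bwdPre h L (List.replicate (k + 1) 0) :=
      bwdPre_main_sep h L hinv hsep hcont hLcp (k + 1) hAL hAconn ⟨y, hyA, hyS⟩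
    have hu : wordTrunc x' (k + 1) ≠
        List.replicate (wordTrunc x' (k + 1)).length 0 := by
      simp only [wordTrunc, List.length_ofFn]
      intro hh
      rw [← List.ofFn_const] at hh
      have := List.ofFn_injective hh
      exact hk (congrFun this ⟨k, k.lt_succ_self⟩)
    have hdisj := bwdPre_zero_disjoint h L hinv hsep (wordTrunc x' (k + 1)) hu
    rw [show (wordTrunc x' (k + 1)).length = k + 1 by simp [wordTrunc]] at hdisj
    rw [eq_empty_iff_forall_notMem] at hdisj
    exact hdisj y' ⟨hAsub hy'A, hy'T⟩
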